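/- Let ϑ : a ↦ {ab, ba}, b ↦ {a} be the random Fibonacci substitution. Then the word bbb is not ϑ-legal. -/
import Mathlib


/-- Extension of a random substitution to words. -/
def substWord {A : Type} (ϑ : A → Set (List A)) : List A → Set (List A)
  | [] => {[]}
  | a :: v => {w | ∃ x ∈ ϑ a, ∃ y ∈ substWord ϑ v, w = x ++ y}

/-- The `n`-th power of a random substitution applied to a letter. -/
def substPow {A : Type} (ϑ : A → Set (List A)) : ℕ → A → Set (List A)
  | 0, a => {[a]}
  | n + 1, a => {w | ∃ v ∈ substPow ϑ n a, w ∈ substWord ϑ v}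

/-- A word is `ϑ`-legal if it is a subword of a super-word of some degree `k ≥ 1`. -/
def RSLegal {A : Type} (ϑ : A → Set (List A)) (w : List A) : Prop :=
  ∃ k : ℕ, 1 ≤ k ∧ ∃ a : A, ∃ v ∈ substPow ϑ k a, w <:+: v

/-- Words that are concatenations of blocks `[0,1]`, `[1,0]`, `[0]`. -/
inductive Blocks : List (Fin 2) → Prop
  | nil : Blocks []
  | ab {w} : Blocks w → Blocks (0 :: 1 :: w)
  | ba {w} : Blocks w → Blocks (1 :: 0 :: w)
  | a {w} : Blocks w → Blocks (0 :: w)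

lemma blocks_one (w : List (Fin 2)) (h : Blocks w) :
    ∀ z, w = 1 :: z → ∃ z', z = 0 :: z' ∧ Blocks z' := by
  cases h with
  | nil => intro z hz; exact absurd hz (by simp)
  | ab h => intro z hz; injection hz with e1 _; exact absurd e1 (by decide)
  | ba h => intro z hz; injection hz with e1 e2; exact ⟨_, e2.symm, h⟩
  | a h => intro z hz; injection hz with e1 _; exact absurd e1 (by decide)

lemma blocks_no111 (w : List (Fin 2)) (h : Blocks w) :
    ∀ s t : List (Fin 2), w ≠ s ++ 1 :: 1 :: 1 :: t := by
  induction h with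
  | nil => intro s t hst; cases s <;> simp at hst
  | ab h ih =>
      intro s t hst
      match s with
      | [] => injection hst with e1 _; exact absurd e1 (by decide)
      | [c] =>
          injection hst with e1 rest
          injection rest with e2 hw
          obtain ⟨z', hz', _⟩ := blocks_one _ h _ hw
          injection hz' with e3 _
          exact absurd e3 (by decide)
      | c :: d :: s' =>
          injection hst with e1 rest
          injection rest with e2 hw
          exact ih s' t hw
  | ba h ih =>
      intro s t hst
      match s with
      | [] =>
          injection hst with e1 rest
          injection rest with e2 _
          exact absurd e2 (by decide)
      | [c] =>
          injection hst with e1 rest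
          injection rest with e2 _
          exact absurd e2 (by decide)
      | c :: d :: s' =>
          injection hst with e1 rest
          injection rest with e2 hw
          exact ih s' t hw
  | a h ih =>
      intro s t hst
      match s with
      | [] => injection hst with e1 _; exact absurd e1 (by decide)
      | c :: s' =>
          injection hst with e1 hw
          exact ih s' t hw

lemma substBlocks (ϑ : Fin 2 → Set (List (Fin 2)))
    (h0 : ϑ 0 = {[0, 1], [1, 0]}) (h1 : ϑ 1 = {[0]}) :
    ∀ v w, w ∈ substWord ϑ v → Blocks w := by
  intro v
  induction v with
  | nil =>
      intro w hw
      simp only [substWord, Set.mem_singleton_iff] at hw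
      subst hw; exact Blocks.nil
  | cons c v ih =>
      intro w hw
      obtain ⟨x, hx, y, hy, rfl⟩ := hw
      have hy' := ih y hy
      have hc : c = 0 ∨ c = 1 := by omega
      rcases hc with rfl | rfl
      · rw [h0] at hx
        rcases hx with rfl | rfl
        · exact Blocks.ab hy'
        · exact Blocks.ba hy'
      · rw [h1] at hx
        rcases hx with rfl
        exact Blocks.a hy'

/-- for the random Fibonacci substitution
`ϑ : a ↦ {ab, ba}, b ↦ {a}` (with `a = 0`, `b = 1`), the word `bbb` is not
`ϑ`-legal. -/
theorem randFib_bbb_not_legal (ϑ : Fin 2 → Set (List (Fin 2)))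
    (h0 : ϑ 0 = {[0, 1], [1, 0]}) (h1 : ϑ 1 = {[0]}) :
    ¬ RSLegal ϑ [1, 1, 1] := by
  rintro ⟨k, hk, a, v, hv, s, t, hst⟩
  obtain ⟨n, rfl⟩ : ∃ n, k = n + 1 := ⟨k - 1, by omega⟩
  obtain ⟨u, _, hu⟩ := hv
  have hb := substBlocks ϑ h0 h1 u v hu
  exact blocks_no111 v hb s t (by simpa using hst.symm)
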